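/- Let 𝓔 be a finite-dimensional complex inner product space, let K and D₀ be subspaces of 𝓔 with D₀ ∩ K ≠ {0}, and let (D_ν)_{ν∈ℕ} be a sequence of subspaces of 𝓔 such that 𝓔 = D_ν ⊕ K for every ν and such that the orthogonal projections P_{D_ν} converge in operator norm to the orthogonal projection P_{D₀}. Then the projections π_{D_ν,K} onto D_ν along K are not uniformly bounded: sup_ν ‖π_{D_ν,K}‖ = ∞. -/

import Mathlib

open Filter

noncomputable section

/-- The orthogonal projection onto a subspace of a finite-dimensional complex
inner product space, viewed as an endomorphism. -/
def oproj {𝓔 : Type*} [NormedAddCommGroup 𝓔] [InnerProductSpace ℂ 𝓔]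
    [FiniteDimensional ℂ 𝓔] (V : Submodule ℂ 𝓔) : 𝓔 →L[ℂ] 𝓔 :=
  V.subtypeL.comp (V.orthogonalProjection)

/-- The (generally non-orthogonal) projection onto `V` along `K`, for complementary
subspaces `V`, `K`, as a continuous endomorphism. -/
def projAlong {𝓔 : Type*} [NormedAddCommGroup 𝓔] [InnerProductSpace ℂ 𝓔]
    [FiniteDimensional ℂ 𝓔] (V K : Submodule ℂ 𝓔) (h : IsCompl V K) : 𝓔 →L[ℂ] 𝓔 :=
  LinearMap.toContinuousLinearMap (V.subtype ∘ₗ Submodule.linearProjOfIsCompl V K h)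

/-- Let `𝓔` be a finite-dimensional complex inner product space, let `K`
and `D₀` be subspaces with `D₀ ∩ K ≠ {0}`, and let `(D_ν)` be a sequence of subspaces
with `𝓔 = D_ν ⊕ K` for every `ν` and such that the orthogonal projections `P_{D_ν}`
converge in operator norm to `P_{D₀}`.  Then the projections `π_{D_ν,K}` onto `D_ν`
along `K` are not uniformly bounded: `sup_ν ‖π_{D_ν,K}‖ = ∞`. -/
theorem stmt_6 (𝓔 : Type*) [NormedAddCommGroup 𝓔] [InnerProductSpace ℂ 𝓔]
    [FiniteDimensional ℂ 𝓔]
    (K D₀ : Submodule ℂ 𝓔) (hD₀K : D₀ ⊓ K ≠ ⊥)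
    (D : ℕ → Submodule ℂ 𝓔) (hc : ∀ ν, IsCompl (D ν) K)
    (hconv : Tendsto (fun ν => ‖oproj (D ν) - oproj D₀‖) atTop (nhds 0)) :
    ∀ C : ℝ, ∃ ν, C < ‖projAlong (D ν) K (hc ν)‖ := by
  obtain ⟨x, hx, hx0⟩ := Submodule.exists_mem_ne_zero_of_ne_bot hD₀K
  obtain ⟨hxD, hxK⟩ := Submodule.mem_inf.mp hx
  intro C
  have hxn : 0 < ‖x‖ := norm_pos_iff.mpr hx0
  set δ : ℝ := min (1/2) (1/(2*(|C|+1))) with hδ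
  have hC1 : 0 < |C| + 1 := by positivity
  have hδ0 : 0 < δ := lt_min (by norm_num) (by positivity)
  have hδhalf : δ ≤ 1/2 := min_le_left _ _
  have hδC : δ ≤ 1/(2*(|C|+1)) := min_le_right _ _
  obtain ⟨ν, hν⟩ : ∃ ν, ‖oproj (D ν) - oproj D₀‖ < δ :=
    (hconv.eventually (gt_mem_nhds hδ0)).exists
  refine ⟨ν, ?_⟩
  set π := projAlong (D ν) K (hc ν) with hπ
  set y := x - oproj (D ν) x with hy
  have hPx : oproj D₀ x = x := by
    exact Submodule.starProjection_eq_self_iff.mpr hxD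
  have hyle : ‖y‖ < δ * ‖x‖ := by
    have hy' : y = -((oproj (D ν) - oproj D₀) x) := by
      simp only [hy, ContinuousLinearMap.sub_apply, hPx, neg_sub]
    rw [hy', norm_neg]
    calc ‖(oproj (D ν) - oproj D₀) x‖ ≤ ‖oproj (D ν) - oproj D₀‖ * ‖x‖ :=
          (oproj (D ν) - oproj D₀).le_opNorm x
      _ < δ * ‖x‖ := by exact mul_lt_mul_of_pos_right hν hxn
  have hPν : ‖x‖ / 2 ≤ ‖oproj (D ν) x‖ := by
    have h1 : ‖y‖ ≤ 1/2 * ‖x‖ :=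
      hyle.le.trans (mul_le_mul_of_nonneg_right hδhalf hxn.le)
    have h2 : ‖x‖ - ‖oproj (D ν) x‖ ≤ ‖y‖ := norm_sub_norm_le _ _
    linarith
  have hy0 : y ≠ 0 := by
    intro h
    have hxDν : x ∈ D ν := by
      have hxx : x = ↑((D ν).orthogonalProjection x) := by
        have := sub_eq_zero.mp h
        simpa [oproj] using this
      rw [hxx]; exact Submodule.coe_mem _
    have hmem : x ∈ D ν ⊓ K := ⟨hxDν, hxK⟩
    rw [(hc ν).inf_eq_bot] at hmem
    exact hx0 (by simpa using hmem)
  have hπx : π x = 0 := by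
    have := Submodule.projectionOnto_apply_right (hc ν) ⟨x, hxK⟩
    simp [hπ, projAlong, Submodule.linearProjOfIsCompl, this]
  have hπP : π (oproj (D ν) x) = oproj (D ν) x := by
    have h1 : oproj (D ν) x = ↑((D ν).orthogonalProjection x) := rfl
    rw [h1]
    have := Submodule.projectionOnto_apply_left (hc ν)
      ((D ν).orthogonalProjection x)
    simp [hπ, projAlong, Submodule.linearProjOfIsCompl, this]
  have hπy : π y = -(oproj (D ν) x) := by
    simp [hy, map_sub, hπx, hπP]
  have key : ‖π y‖ ≤ ‖π‖ * ‖y‖ := π.le_opNorm y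
  rw [hπy, norm_neg] at key
  -- ‖x‖/2 ≤ ‖π‖ * ‖y‖ < ‖π‖ * δ * ‖x‖ (if ‖π‖ > 0)
  have hπ0 : 0 < ‖π‖ := by
    by_contra h
    push_neg at h
    have : ‖π‖ = 0 := le_antisymm h (norm_nonneg _)
    rw [this, zero_mul] at key
    have : 0 < ‖oproj (D ν) x‖ := lt_of_lt_of_le (by linarith) hPν
    linarith
  have h3 : ‖x‖ / 2 < ‖π‖ * (δ * ‖x‖) :=
    lt_of_le_of_lt (hPν.trans key) (mul_lt_mul_of_pos_left hyle hπ0)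
  have h4 : 1 / (2 * δ) < ‖π‖ := by
    rw [div_lt_iff₀ (by positivity)]
    nlinarith [h3, hxn]
  have h6 : |C| + 1 ≤ 1 / (2 * δ) := by
    rw [le_div_iff₀ (by positivity)]
    have := mul_le_mul_of_nonneg_left hδC (by positivity : (0:ℝ) ≤ 2 * (|C| + 1))
    calc (|C| + 1) * (2 * δ) = (2 * (|C| + 1)) * δ := by ring
      _ ≤ (2 * (|C| + 1)) * (1/(2*(|C|+1))) :=
          mul_le_mul_of_nonneg_left hδC (by positivity)
      _ = 1 := by field_simp
  have : C ≤ |C| := le_abs_self C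
  linarith

end
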